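/- arXiv:1110.1010 — 3 statements merged into one kernel-verified Lean document; each statement's English description precedes it below -/
import Mathlib

section
/- Let a, b ∈ ℚ₃ with v(a) ≥ 2 and v(b) = 0. Then the equation x³ + a·x = b has a solution x ∈ ℤ₃* if and only if b is a cube in ℤ₃* up to the correction term, i.e. if and only if b ≡ 1 (mod 9) or b ≡ 8 (mod 9) and the associated digit-congruence system of Theorem 3.6 is solvable; in particular, b ≡ ±1 (mod 9) is a necessary condition. -/
/-- For v(a) ≥ 2 and v(b) = 0: if x³ + a·x = b has a solution x ∈ ℤ₃*, then
b ≡ 1 (mod 9) or b ≡ 8 (mod 9) (the necessary condition b ≡ ±1 mod 9). -/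
theorem stmt14 (a b : ℚ_[3]) (ha : a ≠ 0) (hva : 2 ≤ a.valuation)
    (hb : ‖b‖ = 1) (h : ∃ x : ℚ_[3], ‖x‖ = 1 ∧ x ^ 3 + a * x = b) :
    ‖b - 1‖ ≤ (9 : ℝ)⁻¹ ∨ ‖b - 8‖ ≤ (9 : ℝ)⁻¹ := by
  obtain ⟨x, hx, hxb⟩ := h
  have hna : ‖a‖ ≤ (9 : ℝ)⁻¹ := by
    rw [Padic.norm_eq_zpow_neg_valuation ha]
    calc ((3:ℕ):ℝ) ^ (-a.valuation) ≤ ((3:ℕ):ℝ) ^ (-2 : ℤ) := by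
          apply zpow_le_zpow_right₀ (by norm_num) (by omega)
      _ = (9:ℝ)⁻¹ := by norm_num
  -- find r = ±1 with ‖x - r‖ ≤ 1/3
  set z : ℤ_[3] := ⟨x, hx.le⟩ with hz
  have hz1 : ‖z - (z.appr 1 : ℤ_[3])‖ ≤ ((3:ℕ):ℝ) ^ (-(1:ℕ) : ℤ) :=
    (PadicInt.norm_le_pow_iff_mem_span_pow _ 1).2 (by simpa using z.appr_spec 1)
  have hlt : z.appr 1 < 3 := by simpa using z.appr_lt 1
  have hz0 : z.appr 1 ≠ 0 := by
    intro h0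
    rw [h0] at hz1
    simp only [Nat.cast_zero, sub_zero] at hz1
    have : ‖z‖ = 1 := hx
    rw [this] at hz1
    norm_num at hz1
  have key : ∃ r : ℚ_[3], (r = 1 ∨ r = -1) ∧ ‖x - r‖ ≤ (3:ℝ)⁻¹ := by
    have hco : ‖x - ((z.appr 1 : ℕ) : ℚ_[3])‖ ≤ (3:ℝ)⁻¹ := by
      have := hz1
      rw [PadicInt.norm_def] at this
      push_cast at this
      convert this using 2 <;> norm_num
    have hge : 1 ≤ z.appr 1 := Nat.one_le_iff_ne_zero.2 hz0
    interval_cases h' : z.appr 1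
    · exact ⟨1, Or.inl rfl, by simpa using hco⟩
    · refine ⟨-1, Or.inr rfl, ?_⟩
      have h9 : ‖(3:ℚ_[3])‖ = (3:ℝ)⁻¹ := by
        simpa using Padic.norm_p (p := 3)
      have : x - (-1) = (x - 2) + 3 := by ring
      rw [this]
      refine le_trans (Padic.nonarchimedean _ _) (max_le ?_ (le_of_eq h9))
      simpa using hco
  obtain ⟨r, hr, hxr⟩ := key
  have hrn : ‖r‖ = 1 := by rcases hr with rfl | rfl <;> simp
  have h3 : ‖(3:ℚ_[3])‖ = (3:ℝ)⁻¹ := by simpa using Padic.norm_p (p := 3)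
  -- ‖x^3 - r^3‖ ≤ 1/9
  have hcube : ‖x ^ 3 - r ^ 3‖ ≤ (9:ℝ)⁻¹ := by
    have factored : x ^ 3 - r ^ 3 = (x - r) * ((x - r) * (x + 2 * r) + 3 * r ^ 2) := by ring
    rw [factored, norm_mul]
    have h1 : ‖x + 2 * r‖ ≤ 1 := by
      refine le_trans (Padic.nonarchimedean _ _) (max_le hx.le ?_)
      rw [norm_mul, hrn, mul_one]
      exact Padic.norm_int_le_one (p := 3) 2
    have h2 : ‖(x - r) * (x + 2 * r) + 3 * r ^ 2‖ ≤ (3:ℝ)⁻¹ := by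
      refine le_trans (Padic.nonarchimedean _ _) (max_le ?_ ?_)
      · rw [norm_mul]
        calc ‖x - r‖ * ‖x + 2*r‖ ≤ (3:ℝ)⁻¹ * 1 := by
              apply mul_le_mul hxr h1 (norm_nonneg _) (by norm_num)
          _ = (3:ℝ)⁻¹ := by ring
      · rw [norm_mul, norm_pow, hrn, h3]; norm_num
    calc ‖x - r‖ * ‖(x - r) * (x + 2 * r) + 3 * r ^ 2‖ ≤ (3:ℝ)⁻¹ * (3:ℝ)⁻¹ :=
          mul_le_mul hxr h2 (norm_nonneg _) (by norm_num)
      _ = (9:ℝ)⁻¹ := by norm_num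
  have hbr : ‖b - r ^ 3‖ ≤ (9:ℝ)⁻¹ := by
    have : b - r ^ 3 = (x ^ 3 - r ^ 3) + a * x := by rw [← hxb]; ring
    rw [this]
    refine le_trans (Padic.nonarchimedean _ _) (max_le hcube ?_)
    rw [norm_mul, hx, mul_one]; exact hna
  rcases hr with rfl | rfl
  · left; simpa using hbr
  · right
    have h9 : ‖(9:ℚ_[3])‖ = (9:ℝ)⁻¹ := by
      have : (9:ℚ_[3]) = 3 * 3 := by norm_num
      rw [this, norm_mul, h3]; norm_num
    have e : b - 8 = (b - (-1)^3) + (-9) := by ring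
    rw [e]
    refine le_trans (Padic.nonarchimedean _ _) (max_le hbr ?_)
    rw [norm_neg, h9]
end

section
/- Let a ∈ ℚ₃ with v(a) = 1 and b ∈ ℤ₃*, and suppose x ∈ ℤ₃* satisfies x³ + a·x = b and x₀² + a₀ ≢ 0 (mod 3), where x₀ is the leading digit of x and a₀ the leading digit of 3⁻¹·a. Then x₀³ ≡ b (mod 3) and, writing M₁ = (x₀³ − b₀)/3 with b₀ the leading digit of b, the congruence x₀·a₀ + M₁ ≡ b₁ (mod 3) holds, where b₁ is the second digit of b. -/
/-- For v(a) = 1, b ∈ ℤ₃*: if x ∈ ℤ₃* solves x³ + a·x = b with the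
nondegeneracy condition x₀² + a₀ ≢ 0 (mod 3), then x₀³ ≡ b (mod 3), and with
M₁ = (x₀³ − b₀)/3 one has x₀·a₀ + M₁ ≡ b₁ (mod 3). -/
theorem stmt15 (a b : ℚ_[3]) (ha : a ≠ 0) (hva : a.valuation = 1) (hb : ‖b‖ = 1)
    (x : ℚ_[3]) (hx : ‖x‖ = 1) (heq : x ^ 3 + a * x = b)
    (x₀ a₀ b₀ b₁ : ℤ)
    (hx₀ : x₀ = 1 ∨ x₀ = 2) (ha₀ : a₀ = 1 ∨ a₀ = 2) (hb₀ : b₀ = 1 ∨ b₀ = 2)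
    (hb₁ : b₁ = 0 ∨ b₁ = 1 ∨ b₁ = 2)
    (hxd : ‖x - (x₀ : ℚ_[3])‖ ≤ (3 : ℝ)⁻¹)
    (had : ‖(3 : ℚ_[3])⁻¹ * a - (a₀ : ℚ_[3])‖ ≤ (3 : ℝ)⁻¹)
    (hbd : ‖b - ((b₀ + 3 * b₁ : ℤ) : ℚ_[3])‖ ≤ (9 : ℝ)⁻¹)
    (hnd : ¬ (3 : ℤ) ∣ x₀ ^ 2 + a₀) :
    ‖((x₀ : ℚ_[3])) ^ 3 - b‖ ≤ (3 : ℝ)⁻¹ ∧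
      ∃ M₁ : ℤ, 3 * M₁ = x₀ ^ 3 - b₀ ∧ x₀ * a₀ + M₁ ≡ b₁ [ZMOD 3] := by
  haveI : Fact (Nat.Prime 3) := ⟨by norm_num⟩
  have hmul : ∀ (u v : ℚ_[3]) {cu cv : ℝ}, ‖u‖ ≤ cu → ‖v‖ ≤ cv → 0 ≤ cu →
      ‖u * v‖ ≤ cu * cv := by
    intro u v cu cv hu hv h0
    rw [norm_mul]
    exact mul_le_mul hu hv (norm_nonneg _) h0
  have hna : ‖a‖ = (3:ℝ)⁻¹ := by
    rw [Padic.norm_eq_zpow_neg_valuation ha, hva]; norm_num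
  set d : ℚ_[3] := x - (x₀ : ℚ_[3]) with hd
  have hxle : ‖(x₀ : ℚ_[3])‖ ≤ 1 := Padic.norm_int_le_one x₀
  have h3 : ‖(3 : ℚ_[3])‖ = (3:ℝ)⁻¹ := by
    have := Padic.norm_p (p := 3)
    simpa using this
  have h3x : ‖(3:ℚ_[3]) * (x₀:ℚ_[3])‖ ≤ (3:ℝ)⁻¹ := by
    have := hmul (3:ℚ_[3]) (x₀:ℚ_[3]) h3.le hxle (by norm_num)
    simpa using this
  -- bound on quadratic form
  have hq : ‖x ^ 2 + x * (x₀:ℚ_[3]) + (x₀:ℚ_[3])^2‖ ≤ (3:ℝ)⁻¹ := by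
    have hrw : x ^ 2 + x * (x₀:ℚ_[3]) + (x₀:ℚ_[3])^2
        = d * d + (3 * (x₀:ℚ_[3])) * d + 3 * ((x₀:ℚ_[3]) * (x₀:ℚ_[3])) := by
      rw [hd]; ring
    rw [hrw]
    refine le_trans (Padic.nonarchimedean _ _)
      (max_le (le_trans (Padic.nonarchimedean _ _) (max_le ?_ ?_)) ?_)
    · have := hmul d d hxd hxd (by norm_num)
      refine le_trans this (by norm_num)
    · have := hmul ((3:ℚ_[3]) * (x₀:ℚ_[3])) d h3x hxd (by norm_num)
      refine le_trans this (by norm_num)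
    · have hxx : ‖(x₀:ℚ_[3]) * (x₀:ℚ_[3])‖ ≤ 1 := by
        have := hmul (x₀:ℚ_[3]) (x₀:ℚ_[3]) hxle hxle (by norm_num)
        simpa using this
      have := hmul (3:ℚ_[3]) _ h3.le hxx (by norm_num)
      refine le_trans this (by norm_num)
  -- part 1
  have key1 : ((x₀:ℚ_[3])) ^ 3 - b
      = (-d) * (x ^ 2 + x * (x₀:ℚ_[3]) + (x₀:ℚ_[3])^2) + (-a) * x := by
    rw [← heq, hd]; ring
  have part1 : ‖((x₀ : ℚ_[3])) ^ 3 - b‖ ≤ (3 : ℝ)⁻¹ := by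
    rw [key1]
    refine le_trans (Padic.nonarchimedean _ _) (max_le ?_ ?_)
    · have := hmul (-d) _ (cu := (3:ℝ)⁻¹) (cv := 1) (by rwa [norm_neg])
        (le_trans hq (by norm_num : (3:ℝ)⁻¹ ≤ 1)) (by norm_num)
      refine le_trans this (by norm_num)
    · have := hmul (-a) x (by rw [norm_neg, hna]) hx.le (by norm_num)
      refine le_trans this (by norm_num)
  refine ⟨part1, ?_⟩
  -- divisibility: 3 ∣ x₀^3 - b₀
  have hdvd1 : (3:ℤ) ∣ x₀ ^ 3 - b₀ - 3 * b₁ := by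
    have hlt : ‖((x₀ ^ 3 - b₀ - 3 * b₁ : ℤ) : ℚ_[3])‖ < 1 := by
      have hsplit : ((x₀ ^ 3 - b₀ - 3 * b₁ : ℤ) : ℚ_[3])
          = ((x₀:ℚ_[3])^3 - b) + (b - ((b₀ + 3*b₁ : ℤ) : ℚ_[3])) := by push_cast; ring
      rw [hsplit]
      refine lt_of_le_of_lt (le_trans (Padic.nonarchimedean _ _)
        (max_le part1 (le_trans hbd (by norm_num)))) (by norm_num)
    have := (Padic.norm_intCast_lt_one_iff (p := 3)).mp hlt
    exact_mod_cast this
  have hdvd : (3:ℤ) ∣ x₀ ^ 3 - b₀ := by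
    have h : x₀ ^ 3 - b₀ = (x₀ ^ 3 - b₀ - 3*b₁) + 3*b₁ := by ring
    rw [h]; exact dvd_add hdvd1 ⟨b₁, rfl⟩
  obtain ⟨M₁, hM⟩ := hdvd
  refine ⟨M₁, hM.symm, ?_⟩
  -- key second-order estimate
  have h9dvd : ((3:ℤ)^2) ∣ (x₀^3 + 3*a₀*x₀ - b₀ - 3*b₁) := by
    have hle : ‖((x₀^3 + 3*a₀*x₀ - b₀ - 3*b₁ : ℤ) : ℚ_[3])‖ ≤ (3:ℝ)^(-(2:ℕ):ℤ) := by
      have h3ne : (3:ℚ_[3]) ≠ 0 := by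
        intro h
        rw [h] at h3
        simp at h3
      have hsplit : ((x₀^3 + 3*a₀*x₀ - b₀ - 3*b₁ : ℤ) : ℚ_[3])
          = ((-d) * (x ^ 2 + x * (x₀:ℚ_[3]) + (x₀:ℚ_[3])^2)
             + ((3:ℚ_[3])*(a₀:ℚ_[3])) * (-d)
             + ((-3:ℚ_[3]) * ((3:ℚ_[3])⁻¹ * a - (a₀:ℚ_[3]))) * x)
            + (b - ((b₀ + 3*b₁ : ℤ) : ℚ_[3])) := by
        push_cast
        rw [← heq, hd]
        field_simp
        ring
      rw [hsplit]
      have hgoal9 : ((3:ℝ)^(-(2:ℕ):ℤ)) = (9:ℝ)⁻¹ := by norm_num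
      rw [hgoal9]
      refine le_trans (Padic.nonarchimedean _ _)
        (max_le (le_trans (Padic.nonarchimedean _ _)
          (max_le (le_trans (Padic.nonarchimedean _ _) (max_le ?_ ?_)) ?_)) hbd)
      · have := hmul (-d) _ (cu := (3:ℝ)⁻¹) (by rwa [norm_neg]) hq (by norm_num)
        refine le_trans this (by norm_num)
      · have h3a : ‖(3:ℚ_[3])*(a₀:ℚ_[3])‖ ≤ (3:ℝ)⁻¹ := by
          have := hmul (3:ℚ_[3]) (a₀:ℚ_[3]) h3.le (Padic.norm_int_le_one _)
            (by norm_num)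
          simpa using this
        have := hmul ((3:ℚ_[3])*(a₀:ℚ_[3])) (-d) (cv := (3:ℝ)⁻¹) h3a (by rwa [norm_neg]) (by norm_num)
        refine le_trans this (by norm_num)
      · have hfac : ‖(-3:ℚ_[3]) * ((3:ℚ_[3])⁻¹ * a - (a₀:ℚ_[3]))‖ ≤ (3:ℝ)⁻¹ * (3:ℝ)⁻¹ :=
          hmul _ _ (by rw [norm_neg]; exact h3.le) had (by norm_num)
        have := hmul _ x hfac hx.le (by positivity)
        refine le_trans this (by norm_num)
    have := (Padic.norm_int_le_pow_iff_dvd (p := 3) _ 2).mp hle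
    exact_mod_cast this
  have hfin : (3:ℤ) ∣ (x₀ * a₀ + M₁ - b₁) := by
    have h3M : 3 * (x₀*a₀ + M₁ - b₁) = (x₀^3 + 3*a₀*x₀ - b₀ - 3*b₁) := by
      linear_combination -hM
    rw [pow_two, ← h3M] at h9dvd
    exact (mul_dvd_mul_iff_left (by norm_num : (3:ℤ) ≠ 0)).mp h9dvd
  obtain ⟨k, hk⟩ := hfin
  exact (Int.modEq_iff_dvd.mpr ⟨k, by linear_combination hk⟩).symm
end

section
/- Let a ∈ ℚ₃ with v(a) = 1. Write a = 3a* with a* ∈ ℤ₃*. If x ∈ ℤ₃* satisfies x² + a* ∈ ℤ₃* (i.e. |x² + a*|₃ = 1), then for any b ∈ ℤ₃* with x³ + a·x ≡ b (mod 9), there exists y ∈ ℤ₃* with y ≡ x (mod 3) and y³ + a·y = b. -/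
/-- Hensel lifting for v(a) = 1: write a = 3a* with a* ∈ ℤ₃*. If x ∈ ℤ₃*
satisfies |x² + a*|₃ = 1, then for any b ∈ ℤ₃* with x³ + a·x ≡ b (mod 9),
there exists y ∈ ℤ₃* with y ≡ x (mod 3) and y³ + a·y = b. -/
theorem stmt16 (a astar : ℚ_[3]) (ha : a = 3 * astar) (hastar : ‖astar‖ = 1)
    (x : ℚ_[3]) (hx : ‖x‖ = 1) (hnd : ‖x ^ 2 + astar‖ = 1)
    (b : ℚ_[3]) (hb : ‖b‖ = 1) (hcong : ‖x ^ 3 + a * x - b‖ ≤ (9 : ℝ)⁻¹) :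
    ∃ y : ℚ_[3], ‖y‖ = 1 ∧ ‖y - x‖ ≤ (3 : ℝ)⁻¹ ∧ y ^ 3 + a * y = b := by
  haveI : Fact (Nat.Prime 3) := ⟨by norm_num⟩
  have h3 : ‖(3 : ℚ_[3])‖ = (3 : ℝ)⁻¹ := by
    have := Padic.norm_p (p := 3)
    simpa using this
  have hna : ‖a‖ = (3 : ℝ)⁻¹ := by rw [ha, norm_mul, h3, hastar, mul_one]
  set d : ℚ_[3] := 3 * (x ^ 2 + astar) with hd_def
  have hd : ‖d‖ = (3 : ℝ)⁻¹ := by rw [hd_def, norm_mul, h3, hnd, mul_one]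
  have hd0 : d ≠ 0 := by intro h; rw [h, norm_zero] at hd; norm_num at hd
  set t : ℚ_[3] := -(x ^ 3 + a * x - b) / d with ht_def
  have ht : ‖t‖ ≤ (3 : ℝ)⁻¹ := by
    rw [ht_def, norm_div, norm_neg, hd]
    calc ‖x ^ 3 + a * x - b‖ / (3 : ℝ)⁻¹ ≤ (9 : ℝ)⁻¹ / (3 : ℝ)⁻¹ := by
          apply div_le_div_of_nonneg_right hcong <;> norm_num
      _ = (3 : ℝ)⁻¹ := by norm_num
  have ht_eq : t * d = -(x ^ 3 + a * x - b) := by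
    rw [ht_def]; field_simp
  set x1 : ℚ_[3] := x + t with hx1_def
  have hkey : x1 ^ 3 + a * x1 - b = 3 * x * t ^ 2 + t ^ 3 := by
    rw [hx1_def]
    linear_combination ht_eq + t * ha
  have hfx1 : ‖x1 ^ 3 + a * x1 - b‖ ≤ (27 : ℝ)⁻¹ := by
    rw [hkey]
    refine le_trans (Padic.nonarchimedean _ _) (max_le ?_ ?_)
    · rw [norm_mul, norm_mul, h3, hx, mul_one, norm_pow]
      calc (3 : ℝ)⁻¹ * ‖t‖ ^ 2 ≤ (3 : ℝ)⁻¹ * ((3:ℝ)⁻¹) ^ 2 := by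
            apply mul_le_mul_of_nonneg_left (pow_le_pow_left₀ (norm_nonneg _) ht 2) (by norm_num)
        _ = (27 : ℝ)⁻¹ := by norm_num
    · rw [norm_pow]
      calc ‖t‖ ^ 3 ≤ ((3:ℝ)⁻¹) ^ 3 := pow_le_pow_left₀ (norm_nonneg _) ht 3
        _ = (27 : ℝ)⁻¹ := by norm_num
  have htx : ∀ u : ℚ_[3], ‖u‖ ≤ (3 : ℝ)⁻¹ → ‖x + u‖ = 1 := by
    intro u hu
    rcases eq_or_ne u 0 with h | h
    · simp [h, hx]
    · rw [Padic.add_eq_max_of_ne, hx, max_eq_left]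
      · exact le_trans hu (by norm_num)
      · rw [hx]; intro hc; rw [← hc] at hu; norm_num at hu
  have hx1n : ‖x1‖ = 1 := htx t ht
  have hnd1 : ‖x1 ^ 2 + astar‖ = 1 := by
    have heq : x1 ^ 2 + astar = (x ^ 2 + astar) + t * (2 * x + t) := by
      rw [hx1_def]; ring
    have hsmall : ‖t * (2 * x + t)‖ ≤ (3 : ℝ)⁻¹ := by
      rw [norm_mul]
      calc ‖t‖ * ‖2 * x + t‖ ≤ (3 : ℝ)⁻¹ * 1 := by
            apply mul_le_mul ht _ (norm_nonneg _) (by norm_num)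
            refine le_trans (Padic.nonarchimedean _ _) (max_le ?_ ?_)
            · rw [norm_mul, hx, mul_one]
              exact Padic.norm_int_le_one (2 : ℤ)
            · exact le_trans ht (by norm_num)
        _ = (3 : ℝ)⁻¹ := by norm_num
    rw [heq]
    rcases eq_or_ne (t * (2 * x + t)) 0 with h | h
    · simp [h, hnd]
    · rw [Padic.add_eq_max_of_ne, hnd, max_eq_left]
      · exact le_trans hsmall (by norm_num)
      · rw [hnd]; intro hc; rw [← hc] at hsmall; norm_num at hsmall
  -- move to ℤ_[3]
  have hA : ‖a‖ ≤ 1 := by rw [hna]; norm_num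
  have hB : ‖b‖ ≤ 1 := le_of_eq hb
  have hX1 : ‖x1‖ ≤ 1 := le_of_eq hx1n
  set A : ℤ_[3] := ⟨a, hA⟩
  set B : ℤ_[3] := ⟨b, hB⟩
  set X1 : ℤ_[3] := ⟨x1, hX1⟩
  set F : Polynomial ℤ_[3] := Polynomial.X ^ 3 + Polynomial.C A * Polynomial.X - Polynomial.C B
    with hF_def
  have hFeval : ∀ z : ℤ_[3], F.eval z = z ^ 3 + A * z - B := by
    intro z; simp [hF_def]
  have hFder : F.derivative = Polynomial.C 3 * Polynomial.X ^ 2 + Polynomial.C A := by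
    rw [hF_def]
    simp [Polynomial.derivative_pow]
  have hcoe : ∀ z : ℤ_[3], ((z ^ 3 + A * z - B : ℤ_[3]) : ℚ_[3]) = (z:ℚ_[3]) ^ 3 + a * z - b := by
    intro z; push_cast; ring
  have hderX1 : ‖F.derivative.eval X1‖ = (3 : ℝ)⁻¹ := by
    rw [hFder]
    have : ((((Polynomial.C 3 * Polynomial.X ^ 2 + Polynomial.C A : Polynomial ℤ_[3]).eval X1) : ℤ_[3]) : ℚ_[3])
        = 3 * (x1 ^ 2 + astar) := by
      simp only [Polynomial.eval_add, Polynomial.eval_mul, Polynomial.eval_C,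
        Polynomial.eval_pow, Polynomial.eval_X]
      push_cast
      show (3 : ℚ_[3]) * x1 ^ 2 + a = 3 * (x1 ^ 2 + astar)
      rw [ha]; ring
    rw [PadicInt.norm_def, this, norm_mul, h3, hnd1, mul_one]
  have hevalX1 : ‖F.eval X1‖ ≤ (27 : ℝ)⁻¹ := by
    rw [hFeval, PadicInt.norm_def, hcoe]
    exact hfx1
  have hnorm : ‖F.eval X1‖ < ‖F.derivative.eval X1‖ ^ 2 := by
    rw [hderX1]
    calc ‖F.eval X1‖ ≤ (27 : ℝ)⁻¹ := hevalX1
      _ < ((3:ℝ)⁻¹) ^ 2 := by norm_num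
  obtain ⟨z, hz0, hzclose, -, -⟩ := hensels_lemma hnorm
  rw [Polynomial.coe_aeval_eq_eval, hderX1] at hzclose
  refine ⟨(z : ℚ_[3]), ?_, ?_, ?_⟩
  · have hyx : ‖(z : ℚ_[3]) - x‖ ≤ (3 : ℝ)⁻¹ := by
      have : (z : ℚ_[3]) - x = ((z : ℚ_[3]) - x1) + t := by rw [hx1_def]; ring
      rw [this]
      refine le_trans (Padic.nonarchimedean _ _) (max_le ?_ ht)
      have : ‖(z : ℚ_[3]) - x1‖ = ‖z - X1‖ := by
        rw [PadicInt.norm_def]; push_cast; ring_nf; rfl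
      rw [this]; exact le_of_lt hzclose
    have : (z : ℚ_[3]) = x + ((z : ℚ_[3]) - x) := by ring
    rw [this]
    exact htx _ hyx
  · have : (z : ℚ_[3]) - x = ((z : ℚ_[3]) - x1) + t := by rw [hx1_def]; ring
    rw [this]
    refine le_trans (Padic.nonarchimedean _ _) (max_le ?_ ht)
    have : ‖(z : ℚ_[3]) - x1‖ = ‖z - X1‖ := by
      rw [PadicInt.norm_def]; push_cast; ring_nf; rfl
    rw [this]; exact le_of_lt hzclose
  · rw [Polynomial.coe_aeval_eq_eval, hFeval] at hz0
    have := congrArg (fun w : ℤ_[3] => (w : ℚ_[3])) hz0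
    simp only [hcoe] at this
    have h0 : (z:ℚ_[3]) ^ 3 + a * z - b = 0 := by simpa using this
    linear_combination h0
end
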